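/- Let [(A,α),(C,γ)]_ψ be a Hom-entwining structure. The category of [(A,α),(C,γ)]_ψ-entwined Hom-modules is isomorphic to the category of right Hom-comodules over the associated (A,α)-Hom-coring (A⊗C,α⊗γ). Concretely, a right (A,α)-Hom-module (M,μ) with (C,γ)-Hom-coaction ρ:m↦m_(0)⊗m_(1) satisfies ρ(ma)=m_(0)α^{-1}(a)_κ⊗γ(m_(1)^κ) if and only if the map M→M⊗_A(A⊗C), m↦m_(0)⊗_A(1⊗γ^{-1}(m_(1))) is a right (A⊗C)-Hom-comodule structure. -/
import Mathlib


open TensorProduct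

namespace HomPaper

variable {k : Type*} [CommRing k]
variable {A C V : Type*}
variable [AddCommGroup A] [Module k A] [AddCommGroup C] [Module k C]
variable [AddCommGroup V] [Module k V]

/-- Monoidal Hom-algebra axioms. -/
def IsHomAlgebra (α : A ≃ₗ[k] A) (mul : A →ₗ[k] A →ₗ[k] A) (one : A) : Prop :=
  (∀ a b c, mul (α a) (mul b c) = mul (mul a b) (α c)) ∧
  (∀ a, mul a one = α a) ∧ (∀ a, mul one a = α a) ∧
  (∀ a b, α (mul a b) = mul (α a) (α b)) ∧ α one = one

/-- Monoidal Hom-coalgebra axioms. -/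
def IsHomCoalgebra (γ : C ≃ₗ[k] C) (Δ : C →ₗ[k] C ⊗[k] C) (ε : C →ₗ[k] k) : Prop :=
  (∀ c, TensorProduct.map γ.symm.toLinearMap Δ (Δ c)
      = TensorProduct.assoc k C C C (TensorProduct.map Δ γ.symm.toLinearMap (Δ c))) ∧
  (∀ c, TensorProduct.lid k C (TensorProduct.map ε LinearMap.id (Δ c)) = γ.symm c) ∧
  (∀ c, TensorProduct.rid k C (TensorProduct.map LinearMap.id ε (Δ c)) = γ.symm c) ∧
  (∀ c, Δ (γ c) = TensorProduct.map γ.toLinearMap γ.toLinearMap (Δ c)) ∧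
  (∀ c, ε (γ c) = ε c)

/-- Hom-entwining structure axioms for ψ : C ⊗ A → A ⊗ C, ψ(c⊗a) = a_κ ⊗ c^κ. -/
def IsHomEntwining (α : A ≃ₗ[k] A) (γ : C ≃ₗ[k] C) (mul : A →ₗ[k] A →ₗ[k] A) (one : A)
    (Δ : C →ₗ[k] C ⊗[k] C) (ε : C →ₗ[k] k) (ψ : C ⊗[k] A →ₗ[k] A ⊗[k] C) : Prop :=
  -- (aa')_κ ⊗ γ(c)^κ = a_κ a'_λ ⊗ γ(c^{κλ})
  (∀ c a a', ψ (γ c ⊗ₜ mul a a')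
      = TensorProduct.map (TensorProduct.lift mul) γ.toLinearMap
          ((TensorProduct.assoc k A A C).symm
            (TensorProduct.map LinearMap.id ψ
              (TensorProduct.assoc k A C A (ψ (c ⊗ₜ a) ⊗ₜ a'))))) ∧
  -- α⁻¹(a_κ) ⊗ c^κ₁ ⊗ c^κ₂ = α⁻¹(a)_{κλ} ⊗ c₁^λ ⊗ c₂^κ
  (∀ c a, TensorProduct.map α.symm.toLinearMap Δ (ψ (c ⊗ₜ a))
      = TensorProduct.assoc k A C C
          (TensorProduct.map ψ LinearMap.id
            ((TensorProduct.assoc k C A C).symm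
              (TensorProduct.map LinearMap.id ψ
                (TensorProduct.assoc k C C A (Δ c ⊗ₜ α.symm a)))))) ∧
  -- 1_κ ⊗ c^κ = 1 ⊗ c
  (∀ c, ψ (c ⊗ₜ one) = one ⊗ₜ c) ∧
  -- a_κ ε(c^κ) = a ε(c)
  (∀ c a, TensorProduct.rid k A (TensorProduct.map LinearMap.id ε (ψ (c ⊗ₜ a))) = ε c • a) ∧
  -- ψ is a morphism in the Hom-category
  (∀ c a, ψ (γ c ⊗ₜ α a) = TensorProduct.map α.toLinearMap γ.toLinearMap (ψ (c ⊗ₜ a)))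

/-- The relations defining `V ⊗_A V` (on top of base relations `R₀` defining the coring
module as a quotient of `V`). -/
def corRel (R₀ : Submodule k V) (χ : V ≃ₗ[k] V)
    (lact : A →ₗ[k] V →ₗ[k] V) (ract : V →ₗ[k] A →ₗ[k] V) : Submodule k (V ⊗[k] V) :=
  Submodule.span k
    ({x | ∃ v a w, x = ract v a ⊗ₜ w - χ v ⊗ₜ lact a (χ.symm w)} ∪
     {x | ∃ r w, r ∈ R₀ ∧ (x = r ⊗ₜ w ∨ x = w ⊗ₜ r)})

/-- Induced left A-action on `V ⊗_A V` (on representatives). -/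
noncomputable def lact2 (α : A ≃ₗ[k] A) (χ : V ≃ₗ[k] V) (lact : A →ₗ[k] V →ₗ[k] V) (a : A) :
    V ⊗[k] V →ₗ[k] V ⊗[k] V :=
  TensorProduct.map (lact (α.symm a)) χ.toLinearMap

/-- Induced right A-action on `V ⊗_A V` (on representatives). -/
noncomputable def ract2 (α : A ≃ₗ[k] A) (χ : V ≃ₗ[k] V) (ract : V →ₗ[k] A →ₗ[k] V) (a : A) :
    V ⊗[k] V →ₗ[k] V ⊗[k] V :=
  TensorProduct.map χ.toLinearMap (ract.flip (α.symm a))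

/-- The relations defining `V ⊗_A (V ⊗_A V)`. -/
def corRel3 (R₀ : Submodule k V) (α : A ≃ₗ[k] A) (χ : V ≃ₗ[k] V)
    (lact : A →ₗ[k] V →ₗ[k] V) (ract : V →ₗ[k] A →ₗ[k] V) :
    Submodule k (V ⊗[k] (V ⊗[k] V)) :=
  Submodule.span k
    ({x | ∃ v a w, x = ract v a ⊗ₜ w - χ v ⊗ₜ lact2 α χ lact a w} ∪
     {x | ∃ v w, w ∈ corRel R₀ χ lact ract ∧ x = v ⊗ₜ w} ∪
     {x | ∃ r w, r ∈ R₀ ∧ x = r ⊗ₜ w})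

/-- `(V,χ)` (modulo the relations `R₀`) together with the A-bimodule structure
`lact`, `ract`, comultiplication representative `Δ` and counit `ε` is an
`(A,α)`-Hom-coring: all axioms are stated on representatives, under the quotient
projections by `R₀` resp. the tensor-relation submodules. -/
def IsHomCoring (α : A ≃ₗ[k] A) (mul : A →ₗ[k] A →ₗ[k] A) (one : A)
    (χ : V ≃ₗ[k] V) (lact : A →ₗ[k] V →ₗ[k] V) (ract : V →ₗ[k] A →ₗ[k] V)
    (R₀ : Submodule k V) (Δ : V →ₗ[k] V ⊗[k] V) (ε : V →ₗ[k] A) : Prop :=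
  -- (V,χ) is an (A,α)-Hom-bimodule
  (∀ a b v, Submodule.Quotient.mk (p := R₀) (lact (mul a b) (χ v))
      = Submodule.Quotient.mk (p := R₀) (lact (α a) (lact b v))) ∧
  (∀ v, Submodule.Quotient.mk (p := R₀) (lact one v) = Submodule.Quotient.mk (p := R₀) (χ v)) ∧
  (∀ v a b, Submodule.Quotient.mk (p := R₀) (ract (χ v) (mul a b))
      = Submodule.Quotient.mk (p := R₀) (ract (ract v a) (α b))) ∧
  (∀ v, Submodule.Quotient.mk (p := R₀) (ract v one) = Submodule.Quotient.mk (p := R₀) (χ v)) ∧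
  (∀ a v b, Submodule.Quotient.mk (p := R₀) (ract (lact a v) (α b))
      = Submodule.Quotient.mk (p := R₀) (lact (α a) (ract v b))) ∧
  (∀ a v, Submodule.Quotient.mk (p := R₀) (χ (lact a v))
      = Submodule.Quotient.mk (p := R₀) (lact (α a) (χ v))) ∧
  (∀ v a, Submodule.Quotient.mk (p := R₀) (χ (ract v a))
      = Submodule.Quotient.mk (p := R₀) (ract (χ v) (α a))) ∧
  (∀ r ∈ R₀, χ r ∈ R₀) ∧
  -- Δ and ε are well defined on the quotient by R₀
  (∀ r ∈ R₀, Submodule.Quotient.mk (p := corRel R₀ χ lact ract) (Δ r) = 0) ∧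
  (∀ r ∈ R₀, ε r = 0) ∧
  -- A-bilinearity of Δ
  (∀ a v, Submodule.Quotient.mk (p := corRel R₀ χ lact ract) (Δ (lact a v))
      = Submodule.Quotient.mk (p := corRel R₀ χ lact ract) (lact2 α χ lact a (Δ v))) ∧
  (∀ v a, Submodule.Quotient.mk (p := corRel R₀ χ lact ract) (Δ (ract v a))
      = Submodule.Quotient.mk (p := corRel R₀ χ lact ract) (ract2 α χ ract a (Δ v))) ∧
  -- A-bilinearity of ε
  (∀ a v, ε (lact a v) = mul a (ε v)) ∧
  (∀ v a, ε (ract v a) = mul (ε v) a) ∧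
  -- Hom-coassociativity: χ⁻¹(c₁) ⊗ Δ(c₂) = c₁₁ ⊗ (c₁₂ ⊗ χ⁻¹(c₂))
  (∀ v, Submodule.Quotient.mk (p := corRel3 R₀ α χ lact ract)
        (TensorProduct.map χ.symm.toLinearMap Δ (Δ v))
      = Submodule.Quotient.mk (p := corRel3 R₀ α χ lact ract)
        (TensorProduct.assoc k V V V (TensorProduct.map Δ χ.symm.toLinearMap (Δ v)))) ∧
  -- counity: ε(c₁)c₂ = c = c₁ε(c₂)
  (∀ v, Submodule.Quotient.mk (p := R₀) (TensorProduct.lift (lact ∘ₗ ε) (Δ v))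
      = Submodule.Quotient.mk (p := R₀) v) ∧
  (∀ v, Submodule.Quotient.mk (p := R₀) (TensorProduct.lift (ract.compl₂ ε) (Δ v))
      = Submodule.Quotient.mk (p := R₀) v) ∧
  -- compatibility with the twisting maps
  (∀ v, Submodule.Quotient.mk (p := corRel R₀ χ lact ract) (Δ (χ v))
      = Submodule.Quotient.mk (p := corRel R₀ χ lact ract)
        (TensorProduct.map χ.toLinearMap χ.toLinearMap (Δ v))) ∧
  (∀ v, ε (χ v) = α (ε v))

end HomPaper

namespace HomPaper

variable {k A C : Type*} [CommRing k]
variable [AddCommGroup A] [Module k A] [AddCommGroup C] [Module k C]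

/-- Left `(A,α)`-action on `A ⊗ C`: `a(a'⊗c) = α⁻¹(a)a' ⊗ γ(c)`. -/
noncomputable def entwLact (α : A ≃ₗ[k] A) (γ : C ≃ₗ[k] C) (mul : A →ₗ[k] A →ₗ[k] A) :
    A →ₗ[k] (A ⊗[k] C) →ₗ[k] A ⊗[k] C :=
  TensorProduct.curry
    ((TensorProduct.map
        ((TensorProduct.lift mul) ∘ₗ TensorProduct.map α.symm.toLinearMap LinearMap.id)
        γ.toLinearMap) ∘ₗ (TensorProduct.assoc k A A C).symm.toLinearMap)

/-- Right `(A,α)`-action on `A ⊗ C`: `(a'⊗c)a = a'·α⁻¹(a)_κ ⊗ γ(c^κ)`. -/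
noncomputable def entwRact (α : A ≃ₗ[k] A) (γ : C ≃ₗ[k] C) (mul : A →ₗ[k] A →ₗ[k] A)
    (ψ : C ⊗[k] A →ₗ[k] A ⊗[k] C) : (A ⊗[k] C) →ₗ[k] A →ₗ[k] A ⊗[k] C :=
  TensorProduct.curry
    ((TensorProduct.map (TensorProduct.lift mul) γ.toLinearMap) ∘ₗ
      (TensorProduct.assoc k A A C).symm.toLinearMap ∘ₗ
        (TensorProduct.map LinearMap.id ψ) ∘ₗ
          (TensorProduct.assoc k A C A).toLinearMap ∘ₗ
            (TensorProduct.map LinearMap.id α.symm.toLinearMap))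

/-- Comultiplication of the Hom-coring `A ⊗ C`:
`Δ(a⊗c) = (α⁻¹(a)⊗c₁) ⊗ (1⊗c₂)`. -/
noncomputable def entwComul (α : A ≃ₗ[k] A) (one : A) (ΔC : C →ₗ[k] C ⊗[k] C) :
    (A ⊗[k] C) →ₗ[k] (A ⊗[k] C) ⊗[k] (A ⊗[k] C) :=
  (TensorProduct.map LinearMap.id ((TensorProduct.mk k A C) one)) ∘ₗ
    (TensorProduct.assoc k A C C).symm.toLinearMap ∘ₗ
      (TensorProduct.map α.symm.toLinearMap ΔC)

/-- Counit of the Hom-coring `A ⊗ C`: `ε(a⊗c) = α(a)·ε_C(c)`. -/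
noncomputable def entwCounit (α : A ≃ₗ[k] A) (εC : C →ₗ[k] k) :
    (A ⊗[k] C) →ₗ[k] A :=
  α.toLinearMap ∘ₗ (TensorProduct.rid k A).toLinearMap ∘ₗ
    TensorProduct.map LinearMap.id εC

variable {M : Type*} [AddCommGroup M] [Module k M]

/-- The induced coaction `M → M ⊗_A (A⊗C)`, `m ↦ m₀ ⊗ (1 ⊗ γ⁻¹(m₁))` (representative). -/
noncomputable def entwRho (γ : C ≃ₗ[k] C) (one : A) (ρ : M →ₗ[k] M ⊗[k] C) :
    M →ₗ[k] M ⊗[k] (A ⊗[k] C) :=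
  (TensorProduct.map LinearMap.id ((TensorProduct.mk k A C) one ∘ₗ γ.symm.toLinearMap)) ∘ₗ ρ

/-- The `A`-balancing relations presenting `M ⊗_A (A⊗C)`. -/
noncomputable def entwRelM (α : A ≃ₗ[k] A) (γ : C ≃ₗ[k] C) (mul : A →ₗ[k] A →ₗ[k] A)
    (μ : M ≃ₗ[k] M) (act : M →ₗ[k] A →ₗ[k] M) : Submodule k (M ⊗[k] (A ⊗[k] C)) :=
  Submodule.span k
    {x | ∃ m a w, x = act m a ⊗ₜ w
        - μ m ⊗ₜ (entwLact α γ mul) a ((TensorProduct.congr α γ).symm w)}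

/-- The relations presenting `M ⊗_A ((A⊗C) ⊗_A (A⊗C))`. -/
noncomputable def entwRelM3 (α : A ≃ₗ[k] A) (γ : C ≃ₗ[k] C) (mul : A →ₗ[k] A →ₗ[k] A)
    (ψ : C ⊗[k] A →ₗ[k] A ⊗[k] C) (μ : M ≃ₗ[k] M) (act : M →ₗ[k] A →ₗ[k] M) :
    Submodule k (M ⊗[k] ((A ⊗[k] C) ⊗[k] (A ⊗[k] C))) :=
  Submodule.span k
    ({x | ∃ m a w, x = act m a ⊗ₜ w
        - μ m ⊗ₜ lact2 α (TensorProduct.congr α γ) (entwLact α γ mul) a w} ∪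
     {x | ∃ m w, w ∈ corRel (⊥ : Submodule k (A ⊗[k] C)) (TensorProduct.congr α γ)
        (entwLact α γ mul) (entwRact α γ mul ψ) ∧ x = m ⊗ₜ w})

set_option maxHeartbeats 2000000

/-- The unit-insertion map `c ↦ 1 ⊗ γ⁻¹ c`. -/
noncomputable def entwJ (γ : C ≃ₗ[k] C) (one : A) : C →ₗ[k] A ⊗[k] C :=
  ((TensorProduct.mk k A C) one) ∘ₗ γ.symm.toLinearMap

/-- The canonical identification `M ⊗_A (A⊗C) ≅ M ⊗ C`, `m ⊗ (a⊗c) ↦ μ⁻¹(m)a ⊗ γ(c)`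
(representative level). -/
noncomputable def entwPhi (γ : C ≃ₗ[k] C) (μ : M ≃ₗ[k] M) (act : M →ₗ[k] A →ₗ[k] M) :
    M ⊗[k] (A ⊗[k] C) →ₗ[k] M ⊗[k] C :=
  (TensorProduct.map
      (TensorProduct.lift act ∘ₗ TensorProduct.map μ.symm.toLinearMap LinearMap.id)
      γ.toLinearMap) ∘ₗ (TensorProduct.assoc k M A C).symm.toLinearMap

/-- For a Hom-entwining structure `[(A,α),(C,γ)]_ψ`, a right
`(A,α)`-Hom-module `(M,μ)` with `(C,γ)`-Hom-coaction `ρ` is an entwined Hom-module,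
i.e. `ρ(ma) = m₀·α⁻¹(a)_κ ⊗ γ(m₁^κ)`, if and only if `m ↦ m₀ ⊗_A (1 ⊗ γ⁻¹(m₁))` is a
right Hom-comodule structure over the associated `(A,α)`-Hom-coring `(A⊗C, α⊗γ)`.
(This gives the isomorphism between the category of entwined Hom-modules and the
category of right Hom-comodules of the Hom-coring.) -/
theorem entwined_iff_coring_comodule
    (α : A ≃ₗ[k] A) (mul : A →ₗ[k] A →ₗ[k] A) (one : A)
    (γ : C ≃ₗ[k] C) (ΔC : C →ₗ[k] C ⊗[k] C) (εC : C →ₗ[k] k)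
    (ψ : C ⊗[k] A →ₗ[k] A ⊗[k] C)
    (hA : IsHomAlgebra α mul one) (hC : IsHomCoalgebra γ ΔC εC)
    (hψ : IsHomEntwining α γ mul one ΔC εC ψ)
    (μ : M ≃ₗ[k] M) (act : M →ₗ[k] A →ₗ[k] M) (ρ : M →ₗ[k] M ⊗[k] C)
    -- (M,μ) is a right (A,α)-Hom-module
    (hact1 : ∀ m a b, act (μ m) (mul a b) = act (act m a) (α b))
    (hact2 : ∀ m, act m one = μ m)
    (hact3 : ∀ m a, μ (act m a) = act (μ m) (α a))
    -- (M,μ) is a right (C,γ)-Hom-comodule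
    (hco1 : ∀ m, TensorProduct.map μ.symm.toLinearMap ΔC (ρ m)
        = TensorProduct.assoc k M C C
            (TensorProduct.map ρ γ.symm.toLinearMap (ρ m)))
    (hco2 : ∀ m, TensorProduct.rid k M (TensorProduct.map LinearMap.id εC (ρ m)) = μ.symm m)
    (hco3 : ∀ m, ρ (μ m) = TensorProduct.map μ.toLinearMap γ.toLinearMap (ρ m)) :
    -- entwined Hom-module condition
    (∀ m a, ρ (act m a)
        = TensorProduct.map (TensorProduct.lift act) γ.toLinearMap
            ((TensorProduct.assoc k M A C).symm
              (TensorProduct.map LinearMap.id ψ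
                (TensorProduct.assoc k M C A (ρ m ⊗ₜ α.symm a)))))
    ↔
    -- m ↦ m₀ ⊗_A (1⊗γ⁻¹(m₁)) is a right (A⊗C,α⊗γ)-Hom-comodule structure:
    -- right A-linearity of the coaction
    ((∀ m a, Submodule.Quotient.mk (p := entwRelM α γ mul μ act)
          (entwRho γ one ρ (act m a))
        = Submodule.Quotient.mk (p := entwRelM α γ mul μ act)
          ((TensorProduct.map μ.toLinearMap ((entwRact α γ mul ψ).flip (α.symm a)))
            (entwRho γ one ρ m))) ∧
     -- Hom-coassociativity over the coring
     (∀ m, Submodule.Quotient.mk (p := entwRelM3 α γ mul ψ μ act)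
          ((TensorProduct.map μ.symm.toLinearMap (entwComul α one ΔC))
            (entwRho γ one ρ m))
        = Submodule.Quotient.mk (p := entwRelM3 α γ mul ψ μ act)
          (TensorProduct.assoc k M (A ⊗[k] C) (A ⊗[k] C)
            ((TensorProduct.map (entwRho γ one ρ)
                (TensorProduct.congr α γ).symm.toLinearMap) (entwRho γ one ρ m)))) ∧
     -- counity
     (∀ m, TensorProduct.lift (act.compl₂ (entwCounit α εC)) (entwRho γ one ρ m) = m) ∧
     -- compatibility with the twisting maps
     (∀ m, Submodule.Quotient.mk (p := entwRelM α γ mul μ act)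
          (entwRho γ one ρ (μ m))
        = Submodule.Quotient.mk (p := entwRelM α γ mul μ act)
          ((TensorProduct.map μ.toLinearMap (TensorProduct.congr α γ).toLinearMap)
            (entwRho γ one ρ m)))) := by
  obtain ⟨hAassoc, hAone, hAone', hAmul, hA1⟩ := hA
  obtain ⟨hC1, hC2, hC3, hC4, hC5⟩ := hC
  obtain ⟨hψ1, hψ2, hψ3, hψ4, hψ5⟩ := hψ
  have hα1 : α.symm one = one := by
    conv_lhs => rw [← hA1]
    exact α.symm_apply_apply one
  have hγε : ∀ c, εC (γ.symm c) = εC c := fun c => by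
    conv_rhs => rw [← γ.apply_symm_apply c, hC5]
  have hj : ∀ c, (entwJ γ one) c = one ⊗ₜ γ.symm c := fun c => rfl
  have hrho : ∀ x : M, entwRho γ one ρ x = TensorProduct.map LinearMap.id (entwJ γ one) (ρ x) :=
    fun x => rfl
  -- entwined right action on `1 ⊗ γ⁻¹ c` is just ψ
  have hract : ∀ (c : C) (b : A), entwRact α γ mul ψ ((entwJ γ one) c) b = ψ (c ⊗ₜ b) := by
    intro c b
    have h2 : ∀ u : A ⊗[k] C,
        TensorProduct.map (TensorProduct.lift mul) γ.toLinearMap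
          ((TensorProduct.assoc k A A C).symm (one ⊗ₜ u))
          = TensorProduct.map α.toLinearMap γ.toLinearMap u := by
      intro u
      induction u using TensorProduct.induction_on with
      | zero => simp
      | tmul x y => simp [hAone']
      | add x y hx hy => simp only [TensorProduct.tmul_add, map_add, hx, hy]
    have h1 : entwRact α γ mul ψ ((entwJ γ one) c) b
        = TensorProduct.map (TensorProduct.lift mul) γ.toLinearMap
            ((TensorProduct.assoc k A A C).symm (one ⊗ₜ ψ (γ.symm c ⊗ₜ α.symm b))) := by
      simp [entwRact, hj]
    rw [h1, h2, ← γ.apply_symm_apply c, ← α.apply_symm_apply b, hψ5,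
      γ.symm_apply_apply, α.symm_apply_apply]
  -- entwined left action on pure tensors
  have hlactp : ∀ (b a' : A) (c : C),
      entwLact α γ mul b (a' ⊗ₜ c) = mul (α.symm b) a' ⊗ₜ γ c := by
    intro b a' c; simp [entwLact]
  have hlact : ∀ (b : A) (c : C),
      entwLact α γ mul b ((TensorProduct.congr α γ).symm (one ⊗ₜ c)) = b ⊗ₜ c := by
    intro b c
    rw [TensorProduct.congr_symm_tmul, hlactp, hα1, hAone, α.apply_symm_apply,
      γ.apply_symm_apply]
  -- the basic relation membership
  have hmem : ∀ (m : M) (u : A ⊗[k] C),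
      TensorProduct.map (act m) ((TensorProduct.mk k A C) one) u - μ m ⊗ₜ u
        ∈ entwRelM α γ mul μ act := by
    intro m u
    induction u using TensorProduct.induction_on with
    | zero => simp
    | tmul b c =>
        apply Submodule.subset_span
        refine ⟨m, b, one ⊗ₜ c, ?_⟩
        rw [hlact]
        simp
    | add x y hx hy =>
        have h := Submodule.add_mem _ hx hy
        convert h using 1
        simp only [TensorProduct.tmul_add, map_add]
        abel
  -- key computation for right A-linearity
  have key1 : ∀ (t : M ⊗[k] C) (a : A),
      TensorProduct.map LinearMap.id (entwJ γ one)
          (TensorProduct.map (TensorProduct.lift act) γ.toLinearMap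
            ((TensorProduct.assoc k M A C).symm
              (TensorProduct.map LinearMap.id ψ
                (TensorProduct.assoc k M C A (t ⊗ₜ α.symm a)))))
        - TensorProduct.map μ.toLinearMap ((entwRact α γ mul ψ).flip (α.symm a))
            (TensorProduct.map LinearMap.id (entwJ γ one) t)
        ∈ entwRelM α γ mul μ act := by
    intro t a
    induction t using TensorProduct.induction_on with
    | zero => simp
    | tmul m c =>
        have inner : ∀ v : A ⊗[k] C, TensorProduct.map LinearMap.id (entwJ γ one)
            (TensorProduct.map (TensorProduct.lift act) γ.toLinearMap
              ((TensorProduct.assoc k M A C).symm (m ⊗ₜ v)))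
          = TensorProduct.map (act m) ((TensorProduct.mk k A C) one) v := by
          intro v
          induction v using TensorProduct.induction_on with
          | zero => simp
          | tmul x y => simp [hj]
          | add x y hx hy => simp only [TensorProduct.tmul_add, map_add, hx, hy]
        have e1 : TensorProduct.map LinearMap.id (entwJ γ one)
            (TensorProduct.map (TensorProduct.lift act) γ.toLinearMap
              ((TensorProduct.assoc k M A C).symm
                (TensorProduct.map LinearMap.id ψ
                  (TensorProduct.assoc k M C A ((m ⊗ₜ c) ⊗ₜ α.symm a)))))
          = TensorProduct.map (act m) ((TensorProduct.mk k A C) one)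
              (ψ (c ⊗ₜ α.symm a)) := by
          rw [TensorProduct.assoc_tmul]
          rw [show TensorProduct.map LinearMap.id ψ (m ⊗ₜ (c ⊗ₜ α.symm a))
              = m ⊗ₜ ψ (c ⊗ₜ α.symm a) by simp]
          exact inner _
        have e2 : TensorProduct.map μ.toLinearMap ((entwRact α γ mul ψ).flip (α.symm a))
              (TensorProduct.map LinearMap.id (entwJ γ one) (m ⊗ₜ c))
            = μ m ⊗ₜ ψ (c ⊗ₜ α.symm a) := by
          simp only [TensorProduct.map_tmul, LinearMap.id_coe, id_eq,
            LinearMap.flip_apply, LinearEquiv.coe_coe, hract]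
        rw [e1, e2]
        exact hmem m _
    | add x y hx hy =>
        have h := Submodule.add_mem _ hx hy
        convert h using 1
        simp only [TensorProduct.add_tmul, map_add]
        abel
  -- the canonical identification (entwPhi γ μ act) : M ⊗ (A⊗C) → M ⊗ C
  have hΦ : ∀ (m : M) (a : A) (c : C), (entwPhi γ μ act) (m ⊗ₜ (a ⊗ₜ c)) = act (μ.symm m) a ⊗ₜ γ c := by
    intro m a c; simp [entwPhi]
  have hμact : ∀ m a, μ.symm (act m a) = act (μ.symm m) (α.symm a) := by
    intro m a
    apply μ.injective
    rw [μ.apply_symm_apply, hact3, α.apply_symm_apply, μ.apply_symm_apply]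
  have hΦrel : ∀ x ∈ entwRelM α γ mul μ act, (entwPhi γ μ act) x = 0 := by
    intro x hx
    refine Submodule.span_induction ?_ (by simp) (fun x y _ _ hx hy => by
      rw [map_add, hx, hy, add_zero]) (fun r x _ hx => by rw [map_smul, hx, smul_zero]) hx
    rintro x ⟨m, a, w, rfl⟩
    rw [map_sub, sub_eq_zero]
    induction w using TensorProduct.induction_on with
    | zero => simp
    | tmul a' c =>
        rw [hΦ, TensorProduct.congr_symm_tmul, hlactp, hΦ, μ.symm_apply_apply, hμact]
        have h := hact1 (μ.symm m) (α.symm a) (α.symm a')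
        rw [μ.apply_symm_apply, α.apply_symm_apply] at h
        rw [h, γ.apply_symm_apply]
    | add x y hx hy =>
        simp only [TensorProduct.tmul_add, map_add, hx, hy]
  have hΦj : ∀ t : M ⊗[k] C, (entwPhi γ μ act) (TensorProduct.map LinearMap.id (entwJ γ one) t) = t := by
    intro t
    induction t using TensorProduct.induction_on with
    | zero => simp
    | tmul m c =>
        rw [show TensorProduct.map LinearMap.id (entwJ γ one) (m ⊗ₜ c) = m ⊗ₜ (one ⊗ₜ γ.symm c) by
          simp [hj]]
        rw [hΦ, hact2, μ.apply_symm_apply, γ.apply_symm_apply]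
    | add x y hx hy => simp only [map_add, hx, hy]
  have hΦmul : ∀ (m' : M) (v : A ⊗[k] C), (entwPhi γ μ act) (μ m' ⊗ₜ v)
      = TensorProduct.map (TensorProduct.lift act) γ.toLinearMap
          ((TensorProduct.assoc k M A C).symm (m' ⊗ₜ v)) := by
    intro m' v
    induction v using TensorProduct.induction_on with
    | zero => simp
    | tmul x y => rw [hΦ, μ.symm_apply_apply]; simp
    | add x y hx hy => simp only [TensorProduct.tmul_add, map_add, hx, hy]
  -- Part 2 preliminaries
  have hΔγ : ∀ c, ΔC (γ.symm c)
      = TensorProduct.map γ.symm.toLinearMap γ.symm.toLinearMap (ΔC c) := by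
    have hinv : ∀ u : C ⊗[k] C, TensorProduct.map γ.symm.toLinearMap γ.symm.toLinearMap
        (TensorProduct.map γ.toLinearMap γ.toLinearMap u) = u := by
      intro u
      induction u using TensorProduct.induction_on with
      | zero => simp
      | tmul x y => simp
      | add x y hx hy => simp only [map_add, hx, hy]
    intro c
    have h := hC4 (γ.symm c)
    rw [γ.apply_symm_apply] at h
    rw [h, hinv]
  have hcomulj : ∀ c, entwComul α one ΔC ((entwJ γ one) c) = TensorProduct.map (entwJ γ one) (entwJ γ one) (ΔC c) := by
    intro c
    rw [hj]
    simp only [entwComul, LinearMap.comp_apply, TensorProduct.map_tmul, hα1, hΔγ,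
      LinearEquiv.coe_coe]
    generalize ΔC c = u
    induction u using TensorProduct.induction_on with
    | zero => simp
    | tmul x y => simp [hj]
    | add x y hx hy =>
        simp only [map_add, TensorProduct.tmul_add, hx, hy]
  have part2 : ∀ m, (TensorProduct.map μ.symm.toLinearMap (entwComul α one ΔC))
            (entwRho γ one ρ m)
        = TensorProduct.assoc k M (A ⊗[k] C) (A ⊗[k] C)
            ((TensorProduct.map (entwRho γ one ρ)
                (TensorProduct.congr α γ).symm.toLinearMap) (entwRho γ one ρ m)) := by
    intro m
    have eX : ∀ t : M ⊗[k] C,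
        TensorProduct.map μ.symm.toLinearMap (entwComul α one ΔC)
            (TensorProduct.map LinearMap.id (entwJ γ one) t)
          = TensorProduct.map LinearMap.id (TensorProduct.map (entwJ γ one) (entwJ γ one))
              (TensorProduct.map μ.symm.toLinearMap ΔC t) := by
      intro t
      induction t using TensorProduct.induction_on with
      | zero => simp
      | tmul m' c => simp [hcomulj]
      | add x y hx hy => simp only [map_add, hx, hy]
    have eY : ∀ t : M ⊗[k] C,
        TensorProduct.map (entwRho γ one ρ) (TensorProduct.congr α γ).symm.toLinearMap
            (TensorProduct.map LinearMap.id (entwJ γ one) t)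
          = TensorProduct.map (TensorProduct.map LinearMap.id (entwJ γ one) ∘ₗ ρ) (entwJ γ one)
              (TensorProduct.map LinearMap.id γ.symm.toLinearMap t) := by
      intro t
      induction t using TensorProduct.induction_on with
      | zero => simp
      | tmul m' c =>
          simp only [TensorProduct.map_tmul, LinearMap.id_coe, id_eq,
            LinearEquiv.coe_coe, LinearMap.comp_apply]
          rw [hrho]
          congr 1
          rw [hj, TensorProduct.congr_symm_tmul, hα1, hj]
      | add x y hx hy => simp only [map_add, hx, hy]
    rw [hrho, eX, eY]
    have : TensorProduct.map (TensorProduct.map LinearMap.id (entwJ γ one) ∘ₗ ρ) (entwJ γ one)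
        = TensorProduct.map (TensorProduct.map LinearMap.id (entwJ γ one)) (entwJ γ one) ∘ₗ
            TensorProduct.map ρ LinearMap.id := by
      rw [← TensorProduct.map_comp, LinearMap.comp_id]
    rw [this]
    have comm : TensorProduct.map ρ LinearMap.id
          (TensorProduct.map LinearMap.id γ.symm.toLinearMap (ρ m))
        = TensorProduct.map ρ γ.symm.toLinearMap (ρ m) := by
      rw [← LinearMap.comp_apply, ← TensorProduct.map_comp, LinearMap.comp_id,
        LinearMap.id_comp]
    rw [LinearMap.comp_apply, comm, ← TensorProduct.map_map_assoc, ← hco1 m]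
  -- Part 3 : counity
  have part3 : ∀ m,
      TensorProduct.lift (act.compl₂ (entwCounit α εC)) (entwRho γ one ρ m) = m := by
    intro m
    have hstep : ∀ t : M ⊗[k] C,
        TensorProduct.lift (act.compl₂ (entwCounit α εC))
            (TensorProduct.map LinearMap.id (entwJ γ one) t)
          = μ (TensorProduct.rid k M (TensorProduct.map LinearMap.id εC t)) := by
      intro t
      induction t using TensorProduct.induction_on with
      | zero => simp
      | tmul m' c =>
          simp only [TensorProduct.map_tmul, LinearMap.id_coe, id_eq,
            TensorProduct.lift.tmul, LinearMap.compl₂_apply, hj]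
          rw [show entwCounit α εC (one ⊗ₜ γ.symm c) = εC c • one by
            simp [entwCounit, hγε, hA1]]
          rw [map_smul, hact2, TensorProduct.rid_tmul, map_smul]
      | add x y hx hy => simp only [map_add, hx, hy]
    rw [hrho, hstep, hco2, μ.apply_symm_apply]
  -- Part 4 : compatibility with the twisting maps
  have part4 : ∀ m, entwRho γ one ρ (μ m)
      = (TensorProduct.map μ.toLinearMap (TensorProduct.congr α γ).toLinearMap)
          (entwRho γ one ρ m) := by
    intro m
    rw [hrho, hrho, hco3]
    generalize ρ m = t
    induction t using TensorProduct.induction_on with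
    | zero => simp
    | tmul m' c =>
        simp only [TensorProduct.map_tmul, LinearEquiv.coe_coe, hj, LinearMap.id_coe,
          id_eq, TensorProduct.congr_tmul, hA1, γ.apply_symm_apply, γ.symm_apply_apply]
    | add x y hx hy => simp only [map_add, hx, hy]
  constructor
  · intro hent
    refine ⟨?_, fun m => by rw [part2 m], part3, fun m => by rw [part4 m]⟩
    intro m a
    rw [Submodule.Quotient.eq]
    rw [hrho (act m a), hrho m, hent m a]
    exact key1 (ρ m) a
  · rintro ⟨h1, -⟩
    intro m a
    have hq := (Submodule.Quotient.eq _).mp (h1 m a)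
    have hz : (entwPhi γ μ act) (entwRho γ one ρ (act m a))
        = (entwPhi γ μ act) ((TensorProduct.map μ.toLinearMap ((entwRact α γ mul ψ).flip (α.symm a)))
            (entwRho γ one ρ m)) := by
      rw [← sub_eq_zero, ← map_sub]
      exact hΦrel _ hq
    have hR : ∀ t : M ⊗[k] C,
        (entwPhi γ μ act) (TensorProduct.map μ.toLinearMap ((entwRact α γ mul ψ).flip (α.symm a))
            (TensorProduct.map LinearMap.id (entwJ γ one) t))
          = TensorProduct.map (TensorProduct.lift act) γ.toLinearMap
              ((TensorProduct.assoc k M A C).symm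
                (TensorProduct.map LinearMap.id ψ
                  (TensorProduct.assoc k M C A (t ⊗ₜ α.symm a)))) := by
      intro t
      induction t using TensorProduct.induction_on with
      | zero => simp
      | tmul m' c =>
          rw [show TensorProduct.map LinearMap.id (entwJ γ one) (m' ⊗ₜ c) = m' ⊗ₜ (entwJ γ one) c by simp,
            TensorProduct.map_tmul, LinearMap.flip_apply, LinearEquiv.coe_coe, hract,
            hΦmul, TensorProduct.assoc_tmul]
          all_goals simp
      | add x y hx hy =>
          simp only [TensorProduct.add_tmul, map_add, hx, hy]
    calc ρ (act m a) = (entwPhi γ μ act) (entwRho γ one ρ (act m a)) := by rw [hrho, hΦj]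
      _ = _ := by rw [hz, hrho m, hR (ρ m)]

end HomPaper
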